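/- arXiv:1610.05272 — 2 statements merged into one kernel-verified Lean document; each statement's English description precedes it below -/
import Mathlib

section
/- Let φ : ℂ → ℂ be a continuous bijection with φ(0) = 0 such that for every a, b ∈ ℂ the three points φ(a), φ(a+b), φ(a+2b) are collinear, with φ(a+b) lying on the segment between φ(a) and φ(a+2b). Then φ is additive, i.e., φ maps every line to a line and in fact φ is a real-linear map (φ(x+y) = φ(x) + φ(y) and φ(tx) = tφ(x) for all t ∈ ℝ). -/
/-!
Write `area a b c` for twice the signed area of the triangle `abc`, so that `a, b, c` are
collinear iff it vanishes. The midpoint hypothesis says that `φ` maps the midpoint of a segment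
onto the line through the images of its endpoints; by continuity and dyadic approximation `φ`
then maps every line into a line. Conversely `φ` maps non-collinear triples to non-collinear
ones: otherwise the preimage of the image line would be a set closed under joining points by
lines and containing three non-collinear points, hence the whole plane, contradicting
surjectivity. Preserving collinearity in both directions, the bijection `φ` preserves
parallelism, so it maps a square onto a parallelogram and the common midpoint of the diagonals
onto the common midpoint of the image diagonals. A continuous map fixing `0` and preserving
midpoints is additive and real-linear.
-/

open Set Filter Topology Function

lemma natCast_div_two_pow_mem {S : Set ℝ} (h0 : (0 : ℝ) ∈ S) (h1 : (1 : ℝ) ∈ S)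
    (hmid : ∀ s ∈ S, ∀ t ∈ S, (s + t) / 2 ∈ S) (n : ℕ) {k : ℕ} (hk : k ≤ 2 ^ n) :
    (k : ℝ) / 2 ^ n ∈ S := by
  induction n generalizing k with
  | zero => interval_cases k <;> simpa
  | succ n ih =>
    rw [pow_succ] at hk
    have hk₂ : ((k / 2 : ℕ) : ℝ) + ((k + 1) / 2 : ℕ) = k := by
      exact_mod_cast (by omega : k / 2 + (k + 1) / 2 = k)
    convert hmid _ (ih (k := k / 2) (by omega)) _ (ih (k := (k + 1) / 2) (by omega)) using 1
    rw [← add_div, hk₂, pow_succ, div_div]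

lemma Icc_subset_of_isClosed_of_midpoint_mem {S : Set ℝ} (hS : IsClosed S) (h0 : (0 : ℝ) ∈ S)
    (h1 : (1 : ℝ) ∈ S) (hmid : ∀ s ∈ S, ∀ t ∈ S, (s + t) / 2 ∈ S) : Icc 0 1 ⊆ S := by
  rintro t ⟨ht₀, ht₁⟩
  have hmem (n : ℕ) : (⌊t * 2 ^ n⌋₊ : ℝ) / 2 ^ n ∈ S := by
    refine natCast_div_two_pow_mem h0 h1 hmid n (Nat.floor_le_of_le ?_)
    push_cast
    exact mul_le_of_le_one_left (by positivity) ht₁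
  have hlim : Tendsto (fun n : ℕ => (⌊t * 2 ^ n⌋₊ : ℝ) / 2 ^ n) atTop (𝓝 t) :=
    (tendsto_nat_floor_mul_div_atTop ht₀).comp (tendsto_pow_atTop_atTop_of_one_lt one_lt_two)
  exact hS.mem_of_tendsto hlim (Eventually.of_forall hmem)

namespace Complex

def cross (z w : ℂ) : ℝ := z.re * w.im - z.im * w.re

@[simp] lemma cross_self (z : ℂ) : cross z z = 0 := by simp only [cross]; ring

@[simp] lemma cross_zero_left (w : ℂ) : cross 0 w = 0 := by simp [cross]

@[simp] lemma cross_zero_right (z : ℂ) : cross z 0 = 0 := by simp [cross]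

lemma cross_anticomm (z w : ℂ) : -cross z w = cross w z := by simp only [cross]; ring

@[simp] lemma cross_smul_left (c : ℝ) (z w : ℂ) : cross (c • z) w = c * cross z w := by
  simp only [cross, real_smul, re_ofReal_mul, im_ofReal_mul]; ring

@[simp] lemma cross_smul_right (c : ℝ) (z w : ℂ) : cross z (c • w) = c * cross z w := by
  simp only [cross, real_smul, re_ofReal_mul, im_ofReal_mul]; ring

@[simp] lemma cross_add_left (z z' w : ℂ) : cross (z + z') w = cross z w + cross z' w := by
  simp only [cross, add_re, add_im]; ring

@[simp] lemma cross_add_right (z w w' : ℂ) : cross z (w + w') = cross z w + cross z w' := by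
  simp only [cross, add_re, add_im]; ring

@[simp] lemma cross_sub_left (z z' w : ℂ) : cross (z - z') w = cross z w - cross z' w := by
  simp only [cross, sub_re, sub_im]; ring

@[simp] lemma cross_sub_right (z w w' : ℂ) : cross z (w - w') = cross z w - cross z w' := by
  simp only [cross, sub_re, sub_im]; ring

lemma cross_I_mul_right (z : ℂ) : cross z (I * z) = normSq z := by
  simp only [cross, I_mul_re, I_mul_im, normSq_apply]; ring

lemma _root_.Continuous.complex_cross {α : Type*} [TopologicalSpace α] {f g : α → ℂ}
    (hf : Continuous f) (hg : Continuous g) : Continuous fun x => cross (f x) (g x) := by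
  unfold cross; fun_prop

lemma cross_eq_zero_iff {z w : ℂ} (hz : z ≠ 0) : cross z w = 0 ↔ ∃ k : ℝ, w = k • z := by
  refine ⟨fun h => ?_, by rintro ⟨k, rfl⟩; simp only [cross_smul_right, cross_self, mul_zero]⟩
  have hn : normSq z ≠ 0 := normSq_eq_zero.not.mpr hz
  simp only [cross] at h
  refine ⟨(z.re * w.re + z.im * w.im) / normSq z, Complex.ext ?_ ?_⟩ <;>
    simp only [real_smul, re_ofReal_mul, im_ofReal_mul] <;> field_simp <;>
    simp only [normSq_apply]
  · linear_combination (-z.im) * h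
  · linear_combination z.re * h

lemma exists_eq_smul_add_smul {u v : ℂ} (h : cross u v ≠ 0) (w : ℂ) :
    ∃ a b : ℝ, w = a • u + b • v := by
  refine ⟨cross w v / cross u v, cross u w / cross u v, Complex.ext ?_ ?_⟩ <;>
    simp only [add_re, add_im, real_smul, re_ofReal_mul, im_ofReal_mul] <;> field_simp <;>
    simp only [cross] <;> ring

def area (a b c : ℂ) : ℝ := cross (b - a) (c - a)

@[simp] lemma area_self₁₂ (a c : ℂ) : area a a c = 0 := by simp [area]

@[simp] lemma area_self₁₃ (a b : ℂ) : area a b a = 0 := by simp [area]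

@[simp] lemma area_self₂₃ (a b : ℂ) : area a b b = 0 := by simp [area]

lemma area_rotate (a b c : ℂ) : area b c a = area a b c := by
  simp only [area, cross, sub_re, sub_im]; ring

lemma area_swap₂₃ (a b c : ℂ) : area a c b = -area a b c := by
  simp only [area, cross, sub_re, sub_im]; ring

lemma area_add_smul_sub (a b : ℂ) (t : ℝ) : area a b (a + t • (b - a)) = 0 := by
  simp only [area, add_sub_cancel_left, cross_smul_right, cross_self, mul_zero]

lemma area_affineCombination (a b c d : ℂ) (u : ℝ) :
    area a b ((1 - u) • c + u • d) = (1 - u) * area a b c + u * area a b d := by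
  simp only [area, cross, sub_re, sub_im, add_re, add_im, real_smul, re_ofReal_mul,
    im_ofReal_mul]
  ring

lemma cross_sub_sub (a b c d : ℂ) : cross (b - a) (d - c) = area a b d - area a b c := by
  simp only [area, cross, sub_re, sub_im]; ring

lemma area_eq_zero_iff {a b c : ℂ} (hab : a ≠ b) :
    area a b c = 0 ↔ ∃ k : ℝ, c = a + k • (b - a) := by
  simp only [area, cross_eq_zero_iff (sub_ne_zero.mpr hab.symm), sub_eq_iff_eq_add']

lemma eq_univ_of_area_ne_zero {S : Set ℂ} (hS : ∀ u ∈ S, ∀ v ∈ S, ∀ t : ℝ, u + t • (v - u) ∈ S)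
    {p q r : ℂ} (hp : p ∈ S) (hq : q ∈ S) (hr : r ∈ S) (h : area p q r ≠ 0) : S = univ := by
  refine eq_univ_of_forall fun w => ?_
  obtain ⟨a, b, hab⟩ := exists_eq_smul_add_smul h (w - p)
  have hx := hS p hp q hq a
  have hy := hS p hp r hr b
  have hm := hS _ hx _ hy (1 / 2)
  convert hS p hp _ hm 2 using 1
  rw [sub_eq_iff_eq_add'.mp hab]
  module

lemma exists_area_eq_zero_and_area_eq_zero {a b c d : ℂ} (h : cross (b - a) (d - c) ≠ 0) :
    ∃ z, area a b z = 0 ∧ area c d z = 0 := by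
  obtain ⟨α, β, hαβ⟩ := exists_eq_smul_add_smul h (c - a)
  refine ⟨a + α • (b - a), area_add_smul_sub a b α, ?_⟩
  have hz : a + α • (b - a) = c + (-β) • (d - c) := by
    linear_combination (norm := module) -hαβ
  rw [hz]
  exact area_add_smul_sub c d (-β)

lemma area_eq_zero_of_cross_eq_zero {a b c d z : ℂ} (hab : a ≠ b) (hcd : c ≠ d)
    (h : cross (b - a) (d - c) = 0) (hz₁ : area a b z = 0) (hz₂ : area c d z = 0) :
    area a b c = 0 ∧ area a b d = 0 := by
  obtain ⟨i, hi⟩ := (cross_eq_zero_iff (sub_ne_zero.mpr hab.symm)).mp h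
  obtain ⟨j, hj⟩ := (area_eq_zero_iff hab).mp hz₁
  obtain ⟨k, hk⟩ := (area_eq_zero_iff hcd).mp hz₂
  refine ⟨(area_eq_zero_iff hab).mpr ⟨j - k * i, ?_⟩,
    (area_eq_zero_iff hab).mpr ⟨j - k * i + i, ?_⟩⟩
  · linear_combination (norm := module) hj - hk - k • hi
  · linear_combination (norm := module) hj - hk - k • hi + hi

lemma area_eq_zero_of_area_eq_zero {p q u v w : ℂ} (hpq : p ≠ q) (huv : u ≠ v)
    (hu : area p q u = 0) (hv : area p q v = 0) (hw : area u v w = 0) : area p q w = 0 := by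
  obtain ⟨i, rfl⟩ := (area_eq_zero_iff hpq).mp hu
  obtain ⟨j, rfl⟩ := (area_eq_zero_iff hpq).mp hv
  obtain ⟨k, rfl⟩ := (area_eq_zero_iff huv).mp hw
  exact (area_eq_zero_iff hpq).mpr ⟨i + k * (j - i), by module⟩

lemma eq_midpoint_of_parallelogram {p q r s m : ℂ} (hrs : area p r s ≠ 0)
    (hr : cross (r - p) (q - s) = 0) (hs : cross (s - p) (q - r) = 0)
    (hm₁ : area p q m = 0) (hm₂ : area r s m = 0) : m = midpoint ℝ p q := by
  obtain ⟨X, rfl⟩ : ∃ X, r = p + X := ⟨r - p, by ring⟩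
  obtain ⟨Y, rfl⟩ : ∃ Y, s = p + Y := ⟨s - p, by ring⟩
  simp only [area, add_sub_cancel_left] at hrs hr hs hm₂
  obtain ⟨α, β, hq⟩ := exists_eq_smul_add_smul hrs (q - p)
  obtain ⟨μ, ν, hm⟩ := exists_eq_smul_add_smul hrs (m - p)
  rw [sub_eq_iff_eq_add'] at hq hm
  subst hq hm
  have hYX : cross Y X = -cross X Y := (cross_anticomm X Y).symm
  simp only [area, add_sub_cancel_left, add_sub_add_left_eq_sub, cross_add_left,
    cross_add_right, cross_smul_left, cross_smul_right, cross_self, cross_sub_left,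
    cross_sub_right, hYX] at hr hs hm₁ hm₂
  have hα : α = 1 := mul_right_cancel₀ hrs (by linear_combination -hs)
  have hβ : β = 1 := mul_right_cancel₀ hrs (by linear_combination hr)
  subst hα hβ
  have hν : ν = μ := mul_right_cancel₀ hrs (by linear_combination hm₁)
  have hμ : μ = 1 / 2 := mul_right_cancel₀ hrs (by linear_combination (-hm₂ - hm₁) / 2)
  subst hν hμ
  rw [midpoint_eq_smul_add, invOf_eq_inv]
  module

end Complex

open Complex

section
variable {φ : ℂ → ℂ} (hc : Continuous φ)
  (hcol : ∀ a b : ℂ, ∃ t : ℝ, φ (a + b) = (1 - t) • φ a + t • φ (a + 2 * b))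

include hc hcol

lemma area_map_segment_eq_zero (p q : ℂ) :
    Icc (0 : ℝ) 1 ⊆ {t : ℝ | area (φ p) (φ q) (φ (p + t • (q - p))) = 0} := by
  refine Icc_subset_of_isClosed_of_midpoint_mem ?_ (by simp) (by simp) ?_
  · exact isClosed_eq (continuous_const.complex_cross
      ((hc.comp (by fun_prop)).sub continuous_const)) continuous_const
  · intro s hs t ht
    obtain ⟨u, hu⟩ := hcol (p + s • (q - p)) (((t - s) / 2 : ℝ) • (q - p))
    have e₁ : p + s • (q - p) + ((t - s) / 2 : ℝ) • (q - p) = p + ((s + t) / 2) • (q - p) := by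
      module
    have e₂ : p + s • (q - p) + 2 * (((t - s) / 2 : ℝ) • (q - p)) = p + t • (q - p) := by
      simp only [real_smul]; push_cast; ring
    rw [e₁, e₂] at hu
    rw [mem_ofPred_eq] at hs ht ⊢
    rw [hu, area_affineCombination, hs, ht, mul_zero, mul_zero, add_zero]

lemma area_map_line_eq_zero (p q : ℂ) (t : ℝ) :
    area (φ p) (φ q) (φ (p + t • (q - p))) = 0 := by
  have hseg := area_map_segment_eq_zero hc hcol
  rcases lt_or_ge t 0 with ht | ht
  · have hmem : t / (t - 1) ∈ Icc (0 : ℝ) 1 :=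
      ⟨div_nonneg_of_nonpos ht.le (by linarith), (div_le_one_of_neg (by linarith)).mpr (by linarith)⟩
    have h := hseg (p + t • (q - p)) q hmem
    have hcoef : t / (t - 1) * (1 - t) = -t := by
      rw [div_mul_eq_mul_div, div_eq_iff (by linarith)]; ring
    have e : p + t • (q - p) + (t / (t - 1)) • (q - (p + t • (q - p))) = p := by
      rw [show q - (p + t • (q - p)) = (1 - t) • (q - p) by module, smul_smul, hcoef]
      module
    rw [mem_ofPred_eq, e] at h
    rw [← area_rotate, ← area_rotate, area_swap₂₃, h, neg_zero]
  rcases le_or_gt t 1 with ht' | ht'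
  · exact hseg p q ⟨ht, ht'⟩
  · have h := hseg p (p + t • (q - p)) ⟨inv_nonneg.mpr ht, inv_le_one_of_one_le₀ ht'.le⟩
    rw [mem_ofPred_eq, add_sub_cancel_left, smul_smul, inv_mul_cancel₀ (by positivity),
      one_smul, add_sub_cancel] at h
    rw [area_swap₂₃, h, neg_zero]

lemma area_map_eq_zero {a b c : ℂ} (h : area a b c = 0) : area (φ a) (φ b) (φ c) = 0 := by
  rcases eq_or_ne a b with rfl | hab
  · exact area_self₁₂ _ _
  · obtain ⟨k, rfl⟩ := (area_eq_zero_iff hab).mp h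
    exact area_map_line_eq_zero hc hcol a b k

end

section
variable {φ : ℂ → ℂ}

lemma area_map_ne_zero (hb : Bijective φ)
    (hφ : ∀ {a b c : ℂ}, area a b c = 0 → area (φ a) (φ b) (φ c) = 0)
    {p q r : ℂ} (h : area p q r ≠ 0) : area (φ p) (φ q) (φ r) ≠ 0 := by
  intro hr
  have hpq : φ p ≠ φ q := hb.injective.ne (by rintro rfl; simp at h)
  set S := {w | area (φ p) (φ q) (φ w) = 0}
  have hS : ∀ u ∈ S, ∀ v ∈ S, ∀ t : ℝ, u + t • (v - u) ∈ S := by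
    intro u hu v hv t
    rcases eq_or_ne u v with rfl | huv
    · simpa using hu
    exact area_eq_zero_of_area_eq_zero hpq (hb.injective.ne huv) hu hv
      (hφ (area_add_smul_sub u v t))
  have hSuniv := eq_univ_of_area_ne_zero hS (p := p) (q := q) (by simp [S]) (by simp [S]) hr h
  obtain ⟨w, hw⟩ := hb.surjective (φ p + I * (φ q - φ p))
  have hwS : w ∈ S := hSuniv ▸ mem_univ w
  rw [mem_ofPred_eq, hw, area, add_sub_cancel_left, cross_I_mul_right] at hwS
  exact normSq_eq_zero.not.mpr (sub_ne_zero.mpr hpq.symm) hwS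

lemma cross_map_sub_eq_zero (hs : Surjective φ)
    (hφ : ∀ a b c : ℂ, area (φ a) (φ b) (φ c) = 0 ↔ area a b c = 0)
    {a b c d : ℂ} (h : cross (b - a) (d - c) = 0) : cross (φ b - φ a) (φ d - φ c) = 0 := by
  rcases eq_or_ne a b with rfl | hab
  · simp
  rcases eq_or_ne c d with rfl | hcd
  · simp
  -- If the image lines met at `φ z`, the parallel lines `ab` and `cd` would both contain `z`.
  by_contra hne
  obtain ⟨Z, hZ₁, hZ₂⟩ := exists_area_eq_zero_and_area_eq_zero hne
  obtain ⟨z, rfl⟩ := hs Z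
  rw [hφ] at hZ₁ hZ₂
  obtain ⟨hc, hd⟩ := area_eq_zero_of_cross_eq_zero hab hcd h hZ₁ hZ₂
  rw [cross_sub_sub, (hφ _ _ _).mpr hc, (hφ _ _ _).mpr hd, sub_zero] at hne
  exact hne rfl

lemma map_midpoint (hs : Surjective φ)
    (hφ : ∀ a b c : ℂ, area (φ a) (φ b) (φ c) = 0 ↔ area a b c = 0) (p q : ℂ) :
    φ (midpoint ℝ p q) = midpoint ℝ (φ p) (φ q) := by
  rcases eq_or_ne p q with rfl | hpq
  · simp
  -- `p, r, q, s` is a square whose diagonals `pq` and `rs` meet at `midpoint ℝ p q`.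
  set r := p + I * (q - p)
  set s := q - I * (q - p)
  have hm : midpoint ℝ p q = p + (1 / 2 : ℝ) • (q - p) := by
    rw [midpoint_eq_smul_add, invOf_eq_inv]; module
  have hm' : midpoint ℝ p q = r + (1 / 2 : ℝ) • (s - r) := by
    rw [midpoint_eq_smul_add, invOf_eq_inv]; simp only [r, s]; module
  have hrs : area p r s ≠ 0 := by
    rw [area, show r - p = I * (q - p) by simp [r], show s - p = (q - p) - I * (q - p) by ring,
      cross_sub_right, cross_self, sub_zero, ← cross_anticomm, cross_I_mul_right, neg_ne_zero]
    exact normSq_eq_zero.not.mpr (sub_ne_zero.mpr hpq.symm)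
  refine eq_midpoint_of_parallelogram (r := φ r) (s := φ s) ((hφ _ _ _).not.mpr hrs)
    (cross_map_sub_eq_zero hs hφ ?_) (cross_map_sub_eq_zero hs hφ ?_)
    ((hφ _ _ _).mpr (hm ▸ area_add_smul_sub _ _ _))
    ((hφ _ _ _).mpr (hm' ▸ area_add_smul_sub _ _ _))
  · rw [show q - s = r - p by simp [r, s], cross_self]
  · rw [show q - r = s - p by simp only [r, s]; ring, cross_self]

end

theorem stmt_1 (φ : ℂ → ℂ) (hc : Continuous φ) (hb : Function.Bijective φ)
    (h0 : φ 0 = 0)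
    (hcol : ∀ a b : ℂ, ∃ t : ℝ, t ∈ Set.Icc (0:ℝ) 1 ∧
      φ (a + b) = (1 - t) • φ a + t • φ (a + 2 * b)) :
    (∀ x y : ℂ, φ (x + y) = φ x + φ y) ∧ (∀ (t : ℝ) (x : ℂ), φ (t • x) = t • φ x) := by
  have hline : ∀ a b : ℂ, ∃ t : ℝ, φ (a + b) = (1 - t) • φ a + t • φ (a + 2 * b) :=
    fun a b => (hcol a b).imp fun _ => And.right
  have hpres : ∀ a b c : ℂ, area (φ a) (φ b) (φ c) = 0 ↔ area a b c = 0 := fun a b c =>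
    ⟨not_imp_not.mp (area_map_ne_zero hb (area_map_eq_zero hc hline)),
      area_map_eq_zero hc hline⟩
  let f := AddMonoidHom.ofMapMidpoint ℝ ℝ φ h0 (map_midpoint hb.surjective hpres)
  exact ⟨f.map_add, map_real_smul f hc⟩
end

section
/- Let η : ℝ → ℂ and η̃ : ℝ → ℂ be continuous surjective functions with the same fibers, i.e., for all s, t ∈ ℝ, η(s) = η(t) if and only if η̃(s) = η̃(t). Suppose also that for every z ∈ ℂ the preimage η⁻¹({z}) is a finite set, and that for every compact K ⊆ ℂ the preimage η⁻¹(K) is bounded. Then the map φ : ℂ → ℂ defined by φ(η(t)) = η̃(t) is a well-defined continuous bijection. -/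
theorem stmt_3 (η ηt : ℝ → ℂ) (hη : Continuous η) (hηt : Continuous ηt)
    (hs : Function.Surjective η) (hst : Function.Surjective ηt)
    (hfib : ∀ s t : ℝ, η s = η t ↔ ηt s = ηt t)
    (hfin : ∀ z : ℂ, (η ⁻¹' {z}).Finite)
    (hbdd : ∀ K : Set ℂ, IsCompact K → Bornology.IsBounded (η ⁻¹' K)) :
    ∃! φ : ℂ → ℂ, Continuous φ ∧ Function.Bijective φ ∧ ∀ t, φ (η t) = ηt t := by
  -- η is a quotient map
  have hquot : Topology.IsQuotientMap η := by
    have hclosed : IsClosedMap η := by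
      have hproper : IsProperMap η := by
        rw [isProperMap_iff_isCompact_preimage]
        exact ⟨hη, fun K hK => Metric.isCompact_of_isClosed_isBounded
          (hK.isClosed.preimage hη) (hbdd K hK)⟩
      exact hproper.isClosedMap
    exact hclosed.isQuotientMap hη hs
  classical
  set φ : ℂ → ℂ := fun z => ηt (Function.surjInv hs z) with hφdef
  have key : ∀ t, φ (η t) = ηt t := by
    intro t
    have : η (Function.surjInv hs (η t)) = η t := Function.surjInv_eq hs (η t)
    exact (hfib _ _).mp this
  refine ⟨φ, ⟨?_, ⟨?_, ?_⟩, key⟩, ?_⟩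
  · rw [hquot.continuous_iff]
    exact hηt.congr fun t => (key t).symm
  · intro a b hab
    obtain ⟨s, rfl⟩ := hs a
    obtain ⟨t, rfl⟩ := hs b
    rw [key, key] at hab
    exact (hfib s t).mpr hab
  · intro w
    obtain ⟨t, rfl⟩ := hst w
    exact ⟨η t, key t⟩
  · rintro ψ ⟨-, -, hψ⟩
    funext z
    obtain ⟨t, rfl⟩ := hs z
    rw [hψ, key]
end
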